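/- (Existence of the divergence decomposition in the main example.) For every finitely supported family f = (f^i_α) ∈ F̄^I_{A′} there exists a finitely supported family χ = (χ^{μ i}_α) such that f − ι(j*f) = ∇*χ, where (j*f)_α = Σ_i (−1)^{|i|} D^i(f^i_α), ι is the injection (ιg)^i_α = g_α if i = 0 and 0 otherwise, and (∇*χ)^i_α = Σ_μ ( D_μ χ^{μ i}_α + χ^{μ, i−e_μ}_α ), terms with i^μ = 0 being omitted. -/

import Mathlib

/-!
For `f` concentrated at a single multi-index `j ≠ 0` with value `g`, choose `μ` with `j^μ > 0`
and place `g` at `χ^{μ, j - e_μ}`: its `∇*` is `g` at `j` plus `D_μ g` at `j - e_μ`. What is left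
is the family `-D_μ g` concentrated at `j - e_μ`, of smaller order, so after `|j|` steps (using
that the `D_μ` commute) one is left with `(-1)^{|j|} D^j g` at the index `0`, which is `ι(j*f)`.
A finitely supported `f` is a finite sum of such families, and both sides are additive in `f`.
-/

noncomputable section

variable {𝔽 : Type*} [Field 𝔽] {F : Type*} [CommRing F] [Algebra 𝔽 F] {m : ℕ}
  {A A' : Type*}

/-- Membership in the space of divergences `Div F^M = {Σ_μ D_μ ψ^μ}`. -/
def IsDiv (D : Fin m → Derivation 𝔽 F F) (f : F) : Prop :=
  ∃ ψ : Fin m → F, f = ∑ μ, D μ (ψ μ)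

/-- The evolutionary differentiation `ev_φ f = Σ_a φ^a · ∂_a f` (a finite sum). -/
def ev (pa : A → Derivation 𝔽 F F) (φ : A → F) (f : F) : F :=
  ∑ᶠ a, φ a * pa a f

/-- `(∇φ)^a_μ = D_μ φ^a + Σ_b Γ^a_{μb} · φ^b`; here `Γ b μ a` denotes `Γ^b_{μa}`. -/
def nabla (D : Fin m → Derivation 𝔽 F F) (Γ : A → Fin m → A → F)
    (φ : A → F) (a : A) (μ : Fin m) : F :=
  D μ (φ a) + ∑ᶠ b, Γ a μ b * φ b

/-- `(∇*χ)_a = -Σ_μ D_μ χ^μ_a + Σ_{μ,b} Γ^b_{μa} · χ^μ_b`. -/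
def nablaStar (D : Fin m → Derivation 𝔽 F F) (Γ : A → Fin m → A → F)
    (χ : Fin m → A → F) (a : A) : F :=
  -∑ μ, D μ (χ μ a) + ∑ᶠ b, ∑ μ, Γ b μ a * χ μ b

/-- The pairing `⟨f, φ⟩ = Σ_a f_a · φ^a`. -/
def pair (f φ : A → F) : F := ∑ᶠ a, f a * φ a

/-- `D^i = D_1^{i^1} ∘ ⋯ ∘ D_m^{i^m}`. -/
def Dpow (D : Fin m → Derivation 𝔽 F F) (i : Fin m → ℕ) : F → F :=
  (List.finRange m).foldr (fun μ g => (⇑(D μ))^[i μ] ∘ g) id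

/-- `|i| = i^1 + ⋯ + i^m`. -/
def msize {m : ℕ} (i : Fin m → ℕ) : ℕ := ∑ μ, i μ

/-- The differential operator `P(D)L = Σ_i P_i · D^i L`. -/
def applyP (D : Fin m → Derivation 𝔽 F F) (P : (Fin m → ℕ) → F) (L : F) : F :=
  ∑ᶠ i, P i * Dpow D i L

/-- The Lagrange dual operator `P*(D)K = Σ_i (-1)^{|i|} D^i (P_i · K)`. -/
def applyPstar (D : Fin m → Derivation 𝔽 F F) (P : (Fin m → ℕ) → F) (K : F) : F :=
  ∑ᶠ i, (-1 : F) ^ msize i * Dpow D i (P i * K)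

/-- The jet map `(jφ)^a = Σ_{i,α} j^a_{iα} · D^i φ^α`; here `jc a i α` denotes `j^a_{iα}`. -/
def jmap (D : Fin m → Derivation 𝔽 F F) (jc : A → (Fin m → ℕ) → A' → F)
    (φ : A' → F) (a : A) : F :=
  ∑ᶠ i, ∑ᶠ α, jc a i α * Dpow D i (φ α)

/-- The Lagrange dual `(j*f)_α = Σ_{a,i} (-1)^{|i|} D^i (j^a_{iα} · f_a)`. -/
def jstar (D : Fin m → Derivation 𝔽 F F) (jc : A → (Fin m → ℕ) → A' → F)
    (f : A → F) (α : A') : F :=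
  ∑ᶠ a, ∑ᶠ i, (-1 : F) ^ msize i * Dpow D i (jc a i α * f a)

/-- `(Λf)^α = Σ_{β,i} Λ^{αβ}_i · D^i f_β`; here `Λc α β i` denotes `Λ^{αβ}_i`. -/
def Lam (D : Fin m → Derivation 𝔽 F F) (Λc : A' → A' → (Fin m → ℕ) → F)
    (f : A' → F) (α : A') : F :=
  ∑ᶠ β, ∑ᶠ i, Λc α β i * Dpow D i (f β)

/-- The Lagrange dual `(Λ*f)^α = Σ_{β,i} (-1)^{|i|} D^i (Λ^{βα}_i · f_β)`. -/
def LamStar (D : Fin m → Derivation 𝔽 F F) (Λc : A' → A' → (Fin m → ℕ) → F)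
    (f : A' → F) (α : A') : F :=
  ∑ᶠ β, ∑ᶠ i, (-1 : F) ^ msize i * Dpow D i (Λc β α i * f β)

/-- The variational derivative `δR = j*(∂R)`, where `∂R = (∂_a R)`. -/
def vard (D : Fin m → Derivation 𝔽 F F) (pa : A → Derivation 𝔽 F F)
    (jc : A → (Fin m → ℕ) → A' → F) (R : F) : A' → F :=
  jstar D jc (fun a => pa a R)

/-- The Hamiltonian vector `φ(R) = j(Λ(δR))`. -/
def hamv (D : Fin m → Derivation 𝔽 F F) (pa : A → Derivation 𝔽 F F)
    (jc : A → (Fin m → ℕ) → A' → F) (Λc : A' → A' → (Fin m → ℕ) → F) (R : F) : A → F :=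
  jmap D jc (Lam D Λc (vard D pa jc R))

/-- The commutator `[ev_ψ, Λ]`, acting with coefficients `ev_ψ(Λ^{αβ}_i)`. -/
def evLam (D : Fin m → Derivation 𝔽 F F) (pa : A → Derivation 𝔽 F F)
    (Λc : A' → A' → (Fin m → ℕ) → F) (ψ : A → F) (f : A' → F) (α : A') : F :=
  ∑ᶠ β, ∑ᶠ i, ev pa ψ (Λc α β i) * Dpow D i (f β)

/-- In the main example: `(j*f)_α = Σ_i (-1)^{|i|} D^i (f^i_α)`. -/
def jstarEx {𝔽 : Type*} [Field 𝔽] {F : Type*} [CommRing F] [Algebra 𝔽 F] {m : ℕ}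
    {A' : Type*} (D : Fin m → Derivation 𝔽 F F)
    (f : (Fin m → ℕ) → A' → F) (α : A') : F :=
  ∑ᶠ i, (-1 : F) ^ msize i * Dpow D i (f i α)

/-- In the main example: `(∇*χ)^i_α = Σ_μ (D_μ χ^{μ,i}_α + χ^{μ,i-e_μ}_α)`,
the term `χ^{μ,i-e_μ}_α` being omitted when `i^μ = 0`. -/
def nablaStarEx {𝔽 : Type*} [Field 𝔽] {F : Type*} [CommRing F] [Algebra 𝔽 F] {m : ℕ}
    {A' : Type*} (D : Fin m → Derivation 𝔽 F F)
    (χ : Fin m → (Fin m → ℕ) → A' → F) (i : Fin m → ℕ) (α : A') : F :=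
  ∑ μ, (D μ (χ μ i α)
    + if i μ = 0 then 0 else χ μ (Function.update i μ (i μ - 1)) α)

theorem List.prod_map_pow_eq_prod_map_pow_update_mul {ι M : Type*} [DecidableEq ι] [Monoid M]
    (T : ι → M) (hT : ∀ μ ν, Commute (T μ) (T ν)) {l : List ι} (hl : l.Nodup) {μ : ι}
    (hμ : μ ∈ l) {j : ι → ℕ} (hj : j μ ≠ 0) :
    (l.map fun ν => T ν ^ j ν).prod
      = (l.map fun ν => T ν ^ Function.update j μ (j μ - 1) ν).prod * T μ := by
  induction l with
  | nil => simp at hμ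
  | cons a t ih =>
    rw [List.nodup_cons] at hl
    by_cases ha : a = μ
    · subst ha
      have hrest : (t.map fun ν => T ν ^ Function.update j a (j a - 1) ν)
          = t.map fun ν => T ν ^ j ν :=
        List.map_congr_left fun ν hν => by
          rw [Function.update_of_ne (ne_of_mem_of_not_mem hν hl.1)]
      have hcomm : Commute (T a) (t.map fun ν => T ν ^ j ν).prod :=
        Commute.list_prod_right _ _ fun x hx => by
          obtain ⟨ν, -, rfl⟩ := List.mem_map.mp hx
          exact (hT a ν).pow_right _
      simp only [List.map_cons, List.prod_cons, Function.update_self, hrest]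
      rw [mul_assoc, ← hcomm.eq, ← mul_assoc, pow_sub_one_mul hj]
    · have hμt : μ ∈ t := (List.mem_cons.mp hμ).resolve_left (Ne.symm ha)
      simp only [List.map_cons, List.prod_cons, Function.update_of_ne ha, ih hl.2 hμt, mul_assoc]

section Dpow

variable (D : Fin m → Derivation 𝔽 F F)

theorem Dpow_apply (i : Fin m → ℕ) (x : F) :
    Dpow D i x = ((List.finRange m).map fun μ => (D μ : Module.End 𝔽 F) ^ i μ).prod x := by
  unfold Dpow
  induction List.finRange m with
  | nil => rfl
  | cons a t ih =>
    simp only [List.foldr_cons, Function.comp_apply, ih, List.map_cons, List.prod_cons,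
      Module.End.mul_apply, Module.End.pow_apply, Derivation.coeFn_coe]

@[simp]
theorem Dpow_zero_left (x : F) : Dpow D 0 x = x := by
  simp [Dpow_apply]

@[simp]
theorem Dpow_neg (i : Fin m → ℕ) (x : F) : Dpow D i (-x) = -Dpow D i x := by
  simp only [Dpow_apply, map_neg]

@[simp]
theorem Dpow_zero_right (i : Fin m → ℕ) : Dpow D i 0 = 0 := by
  simp only [Dpow_apply, map_zero]

theorem Dpow_eq_Dpow_update_sub_one (hDcomm : ∀ μ ν (f : F), D μ (D ν f) = D ν (D μ f))
    {j : Fin m → ℕ} {μ : Fin m} (hj : j μ ≠ 0) (x : F) :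
    Dpow D j x = Dpow D (Function.update j μ (j μ - 1)) (D μ x) := by
  have hT : ∀ μ ν, Commute (D μ : Module.End 𝔽 F) (D ν) := fun μ ν =>
    LinearMap.ext fun y => hDcomm μ ν y
  rw [Dpow_apply, Dpow_apply, List.prod_map_pow_eq_prod_map_pow_update_mul _ hT
    (List.nodup_finRange m) (List.mem_finRange μ) hj]
  rfl

end Dpow

theorem msize_update_sub_one {j : Fin m → ℕ} {μ : Fin m} (hj : j μ ≠ 0) :
    msize (Function.update j μ (j μ - 1)) + 1 = msize j := by
  rw [msize, msize, Finset.sum_update_of_mem (Finset.mem_univ μ),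
    Finset.sum_eq_add_sum_sdiff_singleton_of_mem (Finset.mem_univ μ)]
  omega

theorem update_sub_one_eq_update_sub_one_iff {i j : Fin m → ℕ} {μ : Fin m} (hj : j μ ≠ 0) :
    (i μ ≠ 0 ∧ Function.update i μ (i μ - 1) = Function.update j μ (j μ - 1)) ↔ i = j := by
  refine ⟨fun ⟨hi, h⟩ => funext fun ν => ?_, by rintro rfl; exact ⟨hj, rfl⟩⟩
  have := congrFun h ν
  by_cases hν : ν = μ
  · subst hν
    simp only [Function.update_self] at this
    omega
  · simpa only [Function.update_of_ne hν] using this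

section Decomposition

variable (D : Fin m → Derivation 𝔽 F F)

theorem nablaStarEx_add (χ χ' : Fin m → (Fin m → ℕ) → A' → F) (i : Fin m → ℕ) (α : A') :
    nablaStarEx D (χ + χ') i α = nablaStarEx D χ i α + nablaStarEx D χ' i α := by
  simp only [nablaStarEx, Pi.add_apply, map_add, ← Finset.sum_add_distrib]
  refine Finset.sum_congr rfl fun μ _ => ?_
  split_ifs <;> ring

theorem nablaStarEx_sum {ι : Type*} (s : Finset ι) (χ : ι → Fin m → (Fin m → ℕ) → A' → F)
    (i : Fin m → ℕ) (α : A') :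
    nablaStarEx D (fun μ j β => ∑ p ∈ s, χ p μ j β) i α = ∑ p ∈ s, nablaStarEx D (χ p) i α := by
  simp only [nablaStarEx, map_sum]
  rw [Finset.sum_comm]
  refine Finset.sum_congr rfl fun μ _ => ?_
  split_ifs <;> simp only [add_zero, Finset.sum_add_distrib]

theorem nablaStarEx_ite_eq [DecidableEq A'] (μ : Fin m) (j : Fin m → ℕ) (α : A') (g : F)
    (i : Fin m → ℕ) (β : A') :
    nablaStarEx D (fun ν k γ => if ν = μ ∧ k = j ∧ γ = α then g else 0) i β
      = (if (i, β) = (j, α) then D μ g else 0)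
        + if i μ ≠ 0 ∧ Function.update i μ (i μ - 1) = j ∧ β = α then g else 0 := by
  rw [nablaStarEx, Finset.sum_eq_single μ (fun ν _ hν => by simp [hν]) (by simp)]
  simp only [true_and, Prod.mk.injEq, apply_ite (D μ), map_zero]
  split_ifs <;> simp_all

theorem exists_nablaStarEx_eq_single_sub [DecidableEq A']
    (hDcomm : ∀ μ ν (f : F), D μ (D ν f) = D ν (D μ f)) (j : Fin m → ℕ) (α : A') (g : F) :
    ∃ χ : Fin m → (Fin m → ℕ) → A' → F,
      {p : Fin m × (Fin m → ℕ) × A' | χ p.1 p.2.1 p.2.2 ≠ 0}.Finite ∧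
      ∀ i β, nablaStarEx D χ i β
        = (if (i, β) = (j, α) then g else 0)
          - if i = 0 ∧ β = α then (-1) ^ msize j * Dpow D j g else 0 := by
  by_cases hj : j = 0
  · subst hj
    refine ⟨0, by simp, fun i β => ?_⟩
    simp [nablaStarEx, msize]
  obtain ⟨μ, hμ⟩ : ∃ μ, j μ ≠ 0 := Function.ne_iff.mp hj
  set j' := Function.update j μ (j μ - 1)
  obtain ⟨χ, hχfin, hχ⟩ := exists_nablaStarEx_eq_single_sub hDcomm j' α (-D μ g)
  refine ⟨χ + fun ν k γ => if ν = μ ∧ k = j' ∧ γ = α then g else 0,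
    (hχfin.union (Set.finite_singleton (μ, j', α))).subset ?_, fun i β => ?_⟩
  · rintro ⟨ν, k, γ⟩ hp
    by_cases hsingle : ν = μ ∧ k = j' ∧ γ = α
    · simp [hsingle]
    · left
      simpa [hsingle] using hp
  · have hshift : (i μ ≠ 0 ∧ Function.update i μ (i μ - 1) = j' ∧ β = α) ↔ (i, β) = (j, α) := by
      rw [← and_assoc, update_sub_one_eq_update_sub_one_iff hμ, Prod.mk.injEq]
    rw [nablaStarEx_add, hχ, nablaStarEx_ite_eq, if_congr hshift rfl rfl, Dpow_neg,
      ← Dpow_eq_Dpow_update_sub_one D hDcomm hμ, ← msize_update_sub_one hμ]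
    split_ifs <;> ring
termination_by msize j
decreasing_by have := msize_update_sub_one hμ; omega

theorem jstarEx_eq_sum [DecidableEq A']
    {f : (Fin m → ℕ) → A' → F} (hf : {p : (Fin m → ℕ) × A' | f p.1 p.2 ≠ 0}.Finite) (α : A') :
    jstarEx D f α = ∑ p ∈ hf.toFinset,
      if α = p.2 then (-1) ^ msize p.1 * Dpow D p.1 (f p.1 p.2) else 0 := by
  set c : (Fin m → ℕ) × A' → F := fun p =>
    if α = p.2 then (-1) ^ msize p.1 * Dpow D p.1 (f p.1 p.2) else 0
  have hc : Function.support c ⊆ hf.toFinset := fun p hp => by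
    rw [Finset.mem_coe, Set.Finite.mem_toFinset]
    intro h0
    exact hp (by simp only [c, h0, Dpow_zero_right, mul_zero, ite_self])
  rw [← finsum_eq_sum_of_support_subset c hc, finsum_curry c (hf.toFinset.finite_toSet.subset hc),
    jstarEx]
  refine finsum_congr fun i => ((finsum_eq_single _ α fun β hβ => if_neg hβ.symm).trans ?_).symm
  exact if_pos rfl

end Decomposition

/-- existence of the divergence decomposition in the main
example: for every finitely supported `f` there is a finitely supported `χ`
with `f - ι(j*f) = ∇*χ`. -/
theorem stmt_17
    {F : Type*} [CommRing F] [Algebra ℚ F] {m : ℕ} {A' : Type*}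
    (D : Fin m → Derivation ℚ F F)
    (hDcomm : ∀ μ ν (f : F), D μ (D ν f) = D ν (D μ f))
    (f : (Fin m → ℕ) → A' → F)
    (hf : {p : (Fin m → ℕ) × A' | f p.1 p.2 ≠ 0}.Finite) :
    ∃ χ : Fin m → (Fin m → ℕ) → A' → F,
      {p : Fin m × (Fin m → ℕ) × A' | χ p.1 p.2.1 p.2.2 ≠ 0}.Finite ∧
      ∀ (i : Fin m → ℕ) (α : A'),
        f i α - (if i = 0 then jstarEx D f α else 0) = nablaStarEx D χ i α := by
  classical
  choose χ hχfin hχ using fun p : (Fin m → ℕ) × A' =>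
    exists_nablaStarEx_eq_single_sub D hDcomm p.1 p.2 (f p.1 p.2)
  refine ⟨fun μ j β => ∑ p ∈ hf.toFinset, χ p μ j β,
    (hf.toFinset.finite_toSet.biUnion fun p _ => hχfin p).subset (Finset.support_sum _ _),
    fun i α => ?_⟩
  have hsingle : ∑ p ∈ hf.toFinset, (if (i, α) = p then f p.1 p.2 else 0) = f i α := by
    rw [Finset.sum_ite_eq, ite_eq_left_iff, Set.Finite.mem_toFinset]
    exact fun h => (not_not.mp h).symm
  rw [nablaStarEx_sum, Finset.sum_congr rfl fun p _ => hχ p i α, Finset.sum_sub_distrib, hsingle]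
  by_cases hi : i = 0
  · simp [hi, jstarEx_eq_sum D hf]
  · simp [hi]
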